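/- arXiv:2208.04652 — 2 statements merged into one kernel-verified Lean document; each statement's English description precedes it below -/
import Mathlib

section
/- Let A₁, A₂, B be CIF vector subspaces of V such that A₁ is homogeneous with A₂, each of A₁ and A₂ is homogeneous with B, and A₁ + A₂ is homogeneous with B. Then [A₁ + A₂, B] = [A₁, B] + [A₂, B]. -/
namespace CIF

/-- A complex intuitionistic fuzzy (CIF) set on `V`, recorded by the four real-valued
degree functions `r, ω, r̂, ω̂` (so that the membership degree is `λ = r·e^{i2πω}` and
the non-membership degree is `ρ = r̂·e^{i2πω̂}`).  The order on such complex values is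
componentwise, so all notions below are phrased componentwise in the four functions. -/
structure CIFSet (V : Type*) where
  r : V → ℝ
  w : V → ℝ
  rhat : V → ℝ
  what : V → ℝ

namespace CIFSet

/-- `A` is a genuine CIF set: all degree functions take values in `[0,1]` and
`r_A(x) + r̂_A(x) ≤ 1` for all `x`. -/
def IsCIF {V : Type*} (A : CIFSet V) : Prop :=
  ∀ x, A.r x ∈ Set.Icc (0 : ℝ) 1 ∧ A.w x ∈ Set.Icc (0 : ℝ) 1 ∧
    A.rhat x ∈ Set.Icc (0 : ℝ) 1 ∧ A.what x ∈ Set.Icc (0 : ℝ) 1 ∧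
    A.r x + A.rhat x ≤ 1

/-- `A ⊆ B` : `λ_A(x) ≤ λ_B(x)` and `ρ_A(x) ≥ ρ_B(x)` for all `x`
(componentwise in `r, ω`, resp. `r̂, ω̂`). -/
def Subset {V : Type*} (A B : CIFSet V) : Prop :=
  ∀ x, A.r x ≤ B.r x ∧ A.w x ≤ B.w x ∧ B.rhat x ≤ A.rhat x ∧ B.what x ≤ A.what x

/-- `A` is homogeneous with `B`. -/
def Homog {V : Type*} (A B : CIFSet V) : Prop :=
  (∀ x y, A.r x ≤ B.r y ↔ A.w x ≤ B.w y) ∧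
  (∀ x y, A.rhat x ≤ B.rhat y ↔ A.what x ≤ B.what y)

end CIFSet

/-- Supremum of `min (f a) (g b)` over all decompositions `x = a + b`
(the `insert 0` is harmless since all values are `≥ 0`, and makes the value `0`
when no decomposition exists). -/
noncomputable def supDecomp {V : Type*} [Add V] (f g : V → ℝ) (x : V) : ℝ :=
  sSup (insert 0 {t | ∃ a b : V, x = a + b ∧ t = min (f a) (g b)})

/-- Infimum of `max (f a) (g b)` over all decompositions `x = a + b`
(the `insert 1` is harmless since all values are `≤ 1`, and makes the value `1`
when no decomposition exists). -/
noncomputable def infDecomp {V : Type*} [Add V] (f g : V → ℝ) (x : V) : ℝ :=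
  sInf (insert 1 {t | ∃ a b : V, x = a + b ∧ t = max (f a) (g b)})

/-- The complex intuitionistic sum `A + B` of two CIF sets. -/
noncomputable def CIFSet.sum {V : Type*} [Add V] (A B : CIFSet V) : CIFSet V where
  r := supDecomp A.r B.r
  w := supDecomp A.w B.w
  rhat := infDecomp A.rhat B.rhat
  what := infDecomp A.what B.what

/-- `A` is a CIF vector subspace of `V` (with the normalizations
`λ_A(0) = 1·e^{i2π·1}` and `ρ_A(0) = 0·e^{i2π·0}`). -/
structure CIFSet.IsSubspace (K : Type*) [Field K] {V : Type*} [AddCommGroup V]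
    [Module K V] (A : CIFSet V) : Prop where
  isCIF : A.IsCIF
  add_r : ∀ x y, min (A.r x) (A.r y) ≤ A.r (x + y)
  add_w : ∀ x y, min (A.w x) (A.w y) ≤ A.w (x + y)
  add_rhat : ∀ x y, A.rhat (x + y) ≤ max (A.rhat x) (A.rhat y)
  add_what : ∀ x y, A.what (x + y) ≤ max (A.what x) (A.what y)
  smul_r : ∀ (c : K) (x : V), A.r x ≤ A.r (c • x)
  smul_w : ∀ (c : K) (x : V), A.w x ≤ A.w (c • x)
  smul_rhat : ∀ (c : K) (x : V), A.rhat (c • x) ≤ A.rhat x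
  smul_what : ∀ (c : K) (x : V), A.what (c • x) ≤ A.what x
  r_zero : A.r 0 = 1
  w_zero : A.w 0 = 1
  rhat_zero : A.rhat 0 = 0
  what_zero : A.what 0 = 0

open Classical in
/-- The scalar multiple `c • A` of a CIF set: for `c ≠ 0` it is `x ↦ A(c⁻¹ x)`;
for `c = 0` it is `1 = 1·e^{i2π·1}` (resp. `ρ = 0`) at `0`, and `λ = 0`, `ρ = 1·e^{i2π·1}`
elsewhere. -/
noncomputable def CIFSet.smulCIF {K : Type*} [Field K] {V : Type*} [AddCommGroup V]
    [Module K V] (c : K) (A : CIFSet V) : CIFSet V where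
  r x := if c = 0 then (if x = 0 then 1 else 0) else A.r (c⁻¹ • x)
  w x := if c = 0 then (if x = 0 then 1 else 0) else A.w (c⁻¹ • x)
  rhat x := if c = 0 then (if x = 0 then 0 else 1) else A.rhat (c⁻¹ • x)
  what x := if c = 0 then (if x = 0 then 0 else 1) else A.what (c⁻¹ • x)

/-- The set of values `minᵢ (min (f xᵢ) (g yᵢ))` over all finite representations
`x = Σᵢ cᵢ • ⁅xᵢ, yᵢ⁆` with `cᵢ ∈ K`, `xᵢ, yᵢ ∈ V` (nonempty index family). -/
def bracketRepMin (K : Type*) [Field K] {V : Type*} [AddCommGroup V] [Module K V]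
    (br : V → V → V) (f g : V → ℝ) (x : V) : Set ℝ :=
  {t | ∃ (n : ℕ) (c : Fin (n + 1) → K) (a b : Fin (n + 1) → V),
    x = ∑ i, c i • br (a i) (b i) ∧
    t = Finset.univ.inf' Finset.univ_nonempty fun i => min (f (a i)) (g (b i))}

/-- The set of values `maxᵢ (max (f xᵢ) (g yᵢ))` over all finite representations
`x = Σᵢ cᵢ • ⁅xᵢ, yᵢ⁆`. -/
def bracketRepMax (K : Type*) [Field K] {V : Type*} [AddCommGroup V] [Module K V]
    (br : V → V → V) (f g : V → ℝ) (x : V) : Set ℝ :=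
  {t | ∃ (n : ℕ) (c : Fin (n + 1) → K) (a b : Fin (n + 1) → V),
    x = ∑ i, c i • br (a i) (b i) ∧
    t = Finset.univ.sup' Finset.univ_nonempty fun i => max (f (a i)) (g (b i))}

/-- The complex intuitionistic fuzzy bracket product `[A, B]` of two CIF sets, with
respect to the bracket `br` on `V`:  `r` and `ω` are the sup over all finite
representations `x = Σᵢ cᵢ [xᵢ, yᵢ]` of `minᵢ min(·(xᵢ), ·(yᵢ))` (and `0` when no
representation exists), `r̂` and `ω̂` are the inf of `maxᵢ max(·(xᵢ), ·(yᵢ))`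
(and `1` when no representation exists). -/
noncomputable def CIFSet.bracket (K : Type*) [Field K] {V : Type*} [AddCommGroup V]
    [Module K V] (br : V → V → V) (A B : CIFSet V) : CIFSet V where
  r x := sSup (insert 0 (bracketRepMin K br A.r B.r x))
  w x := sSup (insert 0 (bracketRepMin K br A.w B.w x))
  rhat x := sInf (insert 1 (bracketRepMax K br A.rhat B.rhat x))
  what x := sInf (insert 1 (bracketRepMax K br A.what B.what x))

/-- `V`, with the grading given by the complementary submodules `V0, V1` and the
bracket `br`, is a Lie superalgebra over `K`: the bracket is bilinear, respects the
grading, and satisfies super skew-symmetry and the super Jacobi identity on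
homogeneous elements (grades are recorded as `Bool`, `false ↦ V0`, `true ↦ V1`). -/
structure IsLieSuper (K : Type*) [Field K] {V : Type*} [AddCommGroup V] [Module K V]
    (V0 V1 : Submodule K V) (br : V → V → V) : Prop where
  compl : IsCompl V0 V1
  add_left : ∀ x y z : V, br (x + y) z = br x z + br y z
  add_right : ∀ x y z : V, br x (y + z) = br x y + br x z
  smul_left : ∀ (c : K) (x y : V), br (c • x) y = c • br x y
  smul_right : ∀ (c : K) (x y : V), br x (c • y) = c • br x y
  grade : ∀ (g h : Bool), ∀ x ∈ (bif g then V1 else V0), ∀ y ∈ (bif h then V1 else V0),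
    br x y ∈ (bif xor g h then V1 else V0)
  skew : ∀ (g h : Bool), ∀ x ∈ (bif g then V1 else V0), ∀ y ∈ (bif h then V1 else V0),
    br x y = -(((-1 : K) ^ ((bif g then 1 else 0) * (bif h then 1 else 0) : ℕ)) • br y x)
  jacobi : ∀ (g h k : Bool), ∀ x ∈ (bif g then V1 else V0), ∀ y ∈ (bif h then V1 else V0),
    ∀ z ∈ (bif k then V1 else V0),
    ((-1 : K) ^ ((bif g then 1 else 0) * (bif k then 1 else 0) : ℕ)) • br x (br y z) +
    ((-1 : K) ^ ((bif g then 1 else 0) * (bif h then 1 else 0) : ℕ)) • br y (br z x) +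
    ((-1 : K) ^ ((bif h then 1 else 0) * (bif k then 1 else 0) : ℕ)) • br z (br x y) = 0

/-- `A` is a ℤ₂-graded CIF vector subspace of `V` with graded components `A0, A1`:
`A0, A1` are CIF vector subspaces supported in `V0` resp. `V1` (membership degree `0`
and non-membership degree `1` outside), and `A = A0 + A1`. -/
structure IsGradedSubspace (K : Type*) [Field K] {V : Type*} [AddCommGroup V]
    [Module K V] (V0 V1 : Submodule K V) (A A0 A1 : CIFSet V) : Prop where
  subA : CIFSet.IsSubspace K A
  sub0 : CIFSet.IsSubspace K A0
  sub1 : CIFSet.IsSubspace K A1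
  supp0 : ∀ x, x ∉ V0 → A0.r x = 0 ∧ A0.w x = 0 ∧ A0.rhat x = 1 ∧ A0.what x = 1
  supp1 : ∀ x, x ∉ V1 → A1.r x = 0 ∧ A1.w x = 0 ∧ A1.rhat x = 1 ∧ A1.what x = 1
  eq : A = A0.sum A1

/-- `A` is a ℤ₂-graded CIF vector subspace of `V`. -/
def IsGraded (K : Type*) [Field K] {V : Type*} [AddCommGroup V] [Module K V]
    (V0 V1 : Submodule K V) (A : CIFSet V) : Prop :=
  ∃ A0 A1 : CIFSet V, IsGradedSubspace K V0 V1 A A0 A1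

/-- `A` is a CIF ideal of the Lie superalgebra `V`: a ℤ₂-graded CIF vector subspace
with `λ_A([x,y]) ≥ λ_A(x) ∨ λ_A(y)` and `ρ_A([x,y]) ≤ ρ_A(x) ∧ ρ_A(y)`. -/
structure IsIdeal (K : Type*) [Field K] {V : Type*} [AddCommGroup V] [Module K V]
    (V0 V1 : Submodule K V) (br : V → V → V) (A : CIFSet V) : Prop where
  graded : IsGraded K V0 V1 A
  br_r : ∀ x y, max (A.r x) (A.r y) ≤ A.r (br x y)
  br_w : ∀ x y, max (A.w x) (A.w y) ≤ A.w (br x y)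
  br_rhat : ∀ x y, A.rhat (br x y) ≤ min (A.rhat x) (A.rhat y)
  br_what : ∀ x y, A.what (br x y) ≤ min (A.what x) (A.what y)

/-- `f : V → V'` is an anti-homomorphism of Lie superalgebras: a `K`-linear map
preserving the grading with `f [x, y] = -[f x, f y]`. -/
structure IsAntiHom (K : Type*) [Field K] {V V' : Type*} [AddCommGroup V] [Module K V]
    [AddCommGroup V'] [Module K V'] (V0 V1 : Submodule K V) (W0 W1 : Submodule K V')
    (br : V → V → V) (br' : V' → V' → V') (f : V → V') : Prop where
  map_add : ∀ x y, f (x + y) = f x + f y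
  map_smul : ∀ (c : K) (x : V), f (c • x) = c • f x
  map_gr0 : ∀ x ∈ V0, f x ∈ W0
  map_gr1 : ∀ x ∈ V1, f x ∈ W1
  map_br : ∀ x y, f (br x y) = -br' (f x) (f y)

open Classical in
/-- The image `f(A)` of a CIF set under `f`: `λ_{f(A)}(y) = sup_{f x = y} λ_A(x)`
(componentwise) for `y` in the range of `f`, and `0` otherwise; `ρ_{f(A)}(y)` is the
corresponding inf, and `1` outside the range. -/
noncomputable def CIFSet.image {V V' : Type*} (f : V → V') (A : CIFSet V) :
    CIFSet V' where
  r y := if y ∈ Set.range f then sSup {t | ∃ x, f x = y ∧ t = A.r x} else 0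
  w y := if y ∈ Set.range f then sSup {t | ∃ x, f x = y ∧ t = A.w x} else 0
  rhat y := if y ∈ Set.range f then sInf {t | ∃ x, f x = y ∧ t = A.rhat x} else 1
  what y := if y ∈ Set.range f then sInf {t | ∃ x, f x = y ∧ t = A.what x} else 1

/-- The preimage `f⁻¹(B)` of a CIF set under `f`: `λ_{f⁻¹(B)}(x) = λ_B(f x)` and
`ρ_{f⁻¹(B)}(x) = ρ_B(f x)`. -/
def CIFSet.preimage {V V' : Type*} (f : V → V') (B : CIFSet V') : CIFSet V where
  r x := B.r (f x)
  w x := B.w (f x)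
  rhat x := B.rhat (f x)
  what x := B.what (f x)


section AuxLemmas

variable {K : Type*} [Field K] {V : Type*} [AddCommGroup V] [Module K V]

lemma repMin_subset_Icc {br : V → V → V} {f g : V → ℝ}
    (hf : ∀ z, f z ∈ Set.Icc (0:ℝ) 1) (hg : ∀ z, g z ∈ Set.Icc (0:ℝ) 1) (x : V) :
    insert (0:ℝ) (bracketRepMin K br f g x) ⊆ Set.Icc (0:ℝ) 1 := by
  rintro t (rfl | ⟨n, c, a, b, hx, rfl⟩)
  · exact ⟨le_rfl, zero_le_one⟩
  refine ⟨Finset.le_inf' _ _ fun i _ => le_min (hf _).1 (hg _).1, ?_⟩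
  exact le_trans (Finset.inf'_le _ (Finset.mem_univ 0))
    (le_trans (min_le_left _ _) (hf _).2)

lemma repMax_subset_Icc {br : V → V → V} {f g : V → ℝ}
    (hf : ∀ z, f z ∈ Set.Icc (0:ℝ) 1) (hg : ∀ z, g z ∈ Set.Icc (0:ℝ) 1) (x : V) :
    insert (1:ℝ) (bracketRepMax K br f g x) ⊆ Set.Icc (0:ℝ) 1 := by
  rintro t (rfl | ⟨n, c, a, b, hx, rfl⟩)
  · exact ⟨zero_le_one, le_rfl⟩
  refine ⟨?_, Finset.sup'_le _ _ fun i _ => max_le (hf _).2 (hg _).2⟩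
  exact le_trans (le_trans (hf (a 0)).1 (le_max_left _ (g (b 0))))
    (Finset.le_sup' (fun i => max (f (a i)) (g (b i))) (Finset.mem_univ 0))

lemma supDecomp_set_subset_Icc {f g : V → ℝ}
    (hf : ∀ z, f z ∈ Set.Icc (0:ℝ) 1) (hg : ∀ z, g z ∈ Set.Icc (0:ℝ) 1) (x : V) :
    insert (0:ℝ) {t | ∃ a b : V, x = a + b ∧ t = min (f a) (g b)} ⊆ Set.Icc (0:ℝ) 1 := by
  rintro t (rfl | ⟨a, b, hx, rfl⟩)
  · exact ⟨le_rfl, zero_le_one⟩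
  exact ⟨le_min (hf _).1 (hg _).1, le_trans (min_le_left _ _) (hf _).2⟩

lemma infDecomp_set_subset_Icc {f g : V → ℝ}
    (hf : ∀ z, f z ∈ Set.Icc (0:ℝ) 1) (hg : ∀ z, g z ∈ Set.Icc (0:ℝ) 1) (x : V) :
    insert (1:ℝ) {t | ∃ a b : V, x = a + b ∧ t = max (f a) (g b)} ⊆ Set.Icc (0:ℝ) 1 := by
  rintro t (rfl | ⟨a, b, hx, rfl⟩)
  · exact ⟨zero_le_one, le_rfl⟩
  exact ⟨le_trans (hf _).1 (le_max_left _ _), max_le (hf _).2 (hg _).2⟩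

lemma sSup_insert_zero_mem_Icc {S : Set ℝ} (h : insert (0:ℝ) S ⊆ Set.Icc 0 1) :
    sSup (insert (0:ℝ) S) ∈ Set.Icc (0:ℝ) 1 :=
  ⟨le_csSup ⟨1, fun t ht => (h ht).2⟩ (Set.mem_insert _ _),
   Real.sSup_le (fun t ht => (h ht).2) zero_le_one⟩

lemma sInf_insert_one_mem_Icc {S : Set ℝ} (h : insert (1:ℝ) S ⊆ Set.Icc 0 1) :
    sInf (insert (1:ℝ) S) ∈ Set.Icc (0:ℝ) 1 :=
  ⟨le_csInf (Set.insert_nonempty _ _) (fun t ht => (h ht).1),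
   csInf_le ⟨0, fun t ht => (h ht).1⟩ (Set.mem_insert _ _)⟩

lemma supDecomp_mem_Icc {f g : V → ℝ}
    (hf : ∀ z, f z ∈ Set.Icc (0:ℝ) 1) (hg : ∀ z, g z ∈ Set.Icc (0:ℝ) 1) (x : V) :
    supDecomp f g x ∈ Set.Icc (0:ℝ) 1 :=
  sSup_insert_zero_mem_Icc (supDecomp_set_subset_Icc hf hg x)

lemma infDecomp_mem_Icc {f g : V → ℝ}
    (hf : ∀ z, f z ∈ Set.Icc (0:ℝ) 1) (hg : ∀ z, g z ∈ Set.Icc (0:ℝ) 1) (x : V) :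
    infDecomp f g x ∈ Set.Icc (0:ℝ) 1 :=
  sInf_insert_one_mem_Icc (infDecomp_set_subset_Icc hf hg x)

lemma le_supDecomp_left {f g : V → ℝ}
    (hf : ∀ z, f z ∈ Set.Icc (0:ℝ) 1) (hg : ∀ z, g z ∈ Set.Icc (0:ℝ) 1)
    (hg0 : g 0 = 1) (x : V) : f x ≤ supDecomp f g x := by
  have hmem : min (f x) (g 0) ∈
      insert (0:ℝ) {t | ∃ a b : V, x = a + b ∧ t = min (f a) (g b)} :=
    Set.mem_insert_of_mem _ ⟨x, 0, (add_zero x).symm, rfl⟩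
  have h1 : min (f x) (g 0) = f x := by rw [hg0]; exact min_eq_left (hf x).2
  rw [← h1]
  exact le_csSup ⟨1, fun t ht => (supDecomp_set_subset_Icc hf hg x ht).2⟩ hmem

lemma le_supDecomp_right {f g : V → ℝ}
    (hf : ∀ z, f z ∈ Set.Icc (0:ℝ) 1) (hg : ∀ z, g z ∈ Set.Icc (0:ℝ) 1)
    (hf0 : f 0 = 1) (x : V) : g x ≤ supDecomp f g x := by
  have hmem : min (f 0) (g x) ∈
      insert (0:ℝ) {t | ∃ a b : V, x = a + b ∧ t = min (f a) (g b)} :=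
    Set.mem_insert_of_mem _ ⟨0, x, (zero_add x).symm, rfl⟩
  have h1 : min (f 0) (g x) = g x := by rw [hf0]; exact min_eq_right (hg x).2
  rw [← h1]
  exact le_csSup ⟨1, fun t ht => (supDecomp_set_subset_Icc hf hg x ht).2⟩ hmem

lemma infDecomp_le_left {f g : V → ℝ}
    (hf : ∀ z, f z ∈ Set.Icc (0:ℝ) 1) (hg : ∀ z, g z ∈ Set.Icc (0:ℝ) 1)
    (hg0 : g 0 = 0) (x : V) : infDecomp f g x ≤ f x := by
  have hmem : max (f x) (g 0) ∈
      insert (1:ℝ) {t | ∃ a b : V, x = a + b ∧ t = max (f a) (g b)} :=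
    Set.mem_insert_of_mem _ ⟨x, 0, (add_zero x).symm, rfl⟩
  have h1 : max (f x) (g 0) = f x := by rw [hg0]; exact max_eq_left (hf x).1
  rw [← h1]
  exact csInf_le ⟨0, fun t ht => (infDecomp_set_subset_Icc hf hg x ht).1⟩ hmem

lemma infDecomp_le_right {f g : V → ℝ}
    (hf : ∀ z, f z ∈ Set.Icc (0:ℝ) 1) (hg : ∀ z, g z ∈ Set.Icc (0:ℝ) 1)
    (hf0 : f 0 = 0) (x : V) : infDecomp f g x ≤ g x := by
  have hmem : max (f 0) (g x) ∈
      insert (1:ℝ) {t | ∃ a b : V, x = a + b ∧ t = max (f a) (g b)} :=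
    Set.mem_insert_of_mem _ ⟨0, x, (zero_add x).symm, rfl⟩
  have h1 : max (f 0) (g x) = g x := by rw [hf0]; exact max_eq_right (hg x).1
  rw [← h1]
  exact csInf_le ⟨0, fun t ht => (infDecomp_set_subset_Icc hf hg x ht).1⟩ hmem

end AuxLemmas
section CoreSup

variable {K : Type*} [Field K] {V : Type*} [AddCommGroup V] [Module K V]

lemma core_sup (br : V → V → V)
    (hbr : ∀ u v b : V, br (u + v) b = br u b + br v b)
    (f₁ f₂ g : V → ℝ)
    (hf₁ : ∀ z, f₁ z ∈ Set.Icc (0:ℝ) 1) (hf₂ : ∀ z, f₂ z ∈ Set.Icc (0:ℝ) 1)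
    (hg : ∀ z, g z ∈ Set.Icc (0:ℝ) 1)
    (hf₁0 : f₁ 0 = 1) (hf₂0 : f₂ 0 = 1) (x : V) :
    sSup (insert 0 (bracketRepMin K br (supDecomp f₁ f₂) g x))
      = supDecomp (fun u => sSup (insert 0 (bracketRepMin K br f₁ g u)))
          (fun v => sSup (insert 0 (bracketRepMin K br f₂ g v))) x := by
  set s : V → ℝ := supDecomp f₁ f₂ with hs
  have hsIcc : ∀ z, s z ∈ Set.Icc (0:ℝ) 1 := fun z => supDecomp_mem_Icc hf₁ hf₂ z
  set P : V → ℝ := fun u => sSup (insert 0 (bracketRepMin K br f₁ g u)) with hP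
  set Q : V → ℝ := fun v => sSup (insert 0 (bracketRepMin K br f₂ g v)) with hQ
  have hPIcc : ∀ z, P z ∈ Set.Icc (0:ℝ) 1 :=
    fun z => sSup_insert_zero_mem_Icc (repMin_subset_Icc hf₁ hg z)
  have hQIcc : ∀ z, Q z ∈ Set.Icc (0:ℝ) 1 :=
    fun z => sSup_insert_zero_mem_Icc (repMin_subset_Icc hf₂ hg z)
  have hRHSnn : (0:ℝ) ≤ supDecomp P Q x := (supDecomp_mem_Icc hPIcc hQIcc x).1
  have hLHSnn : (0:ℝ) ≤ sSup (insert 0 (bracketRepMin K br s g x)) :=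
    (sSup_insert_zero_mem_Icc (repMin_subset_Icc hsIcc hg x)).1
  have bddLHS : BddAbove (insert (0:ℝ) (bracketRepMin K br s g x)) :=
    ⟨1, fun t ht => (repMin_subset_Icc hsIcc hg x ht).2⟩
  have bddRHS : BddAbove (insert (0:ℝ) {t | ∃ a b : V, x = a + b ∧ t = min (P a) (Q b)}) :=
    ⟨1, fun t ht => (supDecomp_set_subset_Icc hPIcc hQIcc x ht).2⟩
  have key : ∀ (a : V) (ε : ℝ), 0 < ε →
      ∃ u v : V, a = u + v ∧ s a - ε ≤ min (f₁ u) (f₂ v) := by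
    intro a ε hε
    have hlt : s a - ε < sSup (insert (0:ℝ)
        {t | ∃ u v : V, a = u + v ∧ t = min (f₁ u) (f₂ v)}) := sub_lt_self _ hε
    obtain ⟨w, hw, hlt'⟩ := exists_lt_of_lt_csSup (Set.insert_nonempty _ _) hlt
    rcases hw with rfl | ⟨u, v, huv, rfl⟩
    · exact ⟨a, 0, (add_zero a).symm,
        le_trans hlt'.le (le_min (hf₁ a).1 (by rw [hf₂0]; exact zero_le_one))⟩
    · exact ⟨u, v, huv, hlt'.le⟩
  apply le_antisymm
  · refine Real.sSup_le ?_ hRHSnn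
    rintro t (rfl | ⟨n, c, a, b, hxrep, rfl⟩)
    · exact hRHSnn
    refine le_of_forall_pos_le_add fun ε hε => ?_
    choose u v huv hge using fun i : Fin (n + 1) => key (a i) ε hε
    set U : V := ∑ i, c i • br (u i) (b i) with hU
    set W : V := ∑ i, c i • br (v i) (b i) with hW
    have hxUW : x = U + W := by
      rw [hxrep, hU, hW, ← Finset.sum_add_distrib]
      refine Finset.sum_congr rfl fun i _ => ?_
      rw [huv i, hbr, smul_add]
    have hti : ∀ i : Fin (n + 1),
        (Finset.univ.inf' Finset.univ_nonempty fun j => min (s (a j)) (g (b j)))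
          ≤ min (s (a i)) (g (b i)) := fun i => Finset.inf'_le _ (Finset.mem_univ i)
    have hTU : (Finset.univ.inf' Finset.univ_nonempty fun j => min (s (a j)) (g (b j))) - ε
        ≤ P U := by
      have hmem : (Finset.univ.inf' Finset.univ_nonempty fun i => min (f₁ (u i)) (g (b i)))
          ∈ bracketRepMin K br f₁ g U := ⟨n, c, u, b, hU, rfl⟩
      refine le_trans ?_ (le_csSup ⟨1, fun t ht => (repMin_subset_Icc hf₁ hg U ht).2⟩
        (Set.mem_insert_of_mem _ hmem))
      refine Finset.le_inf' _ _ fun i _ => ?_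
      have h1 := hti i
      have h2 : s (a i) - ε ≤ f₁ (u i) := le_trans (hge i) (min_le_left _ _)
      have h3 := (min_le_left (s (a i)) (g (b i)))
      have h4 := (min_le_right (s (a i)) (g (b i)))
      refine le_min (by linarith) (by linarith)
    have hTW : (Finset.univ.inf' Finset.univ_nonempty fun j => min (s (a j)) (g (b j))) - ε
        ≤ Q W := by
      have hmem : (Finset.univ.inf' Finset.univ_nonempty fun i => min (f₂ (v i)) (g (b i)))
          ∈ bracketRepMin K br f₂ g W := ⟨n, c, v, b, hW, rfl⟩
      refine le_trans ?_ (le_csSup ⟨1, fun t ht => (repMin_subset_Icc hf₂ hg W ht).2⟩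
        (Set.mem_insert_of_mem _ hmem))
      refine Finset.le_inf' _ _ fun i _ => ?_
      have h1 := hti i
      have h2 : s (a i) - ε ≤ f₂ (v i) := le_trans (hge i) (min_le_right _ _)
      have h3 := (min_le_left (s (a i)) (g (b i)))
      have h4 := (min_le_right (s (a i)) (g (b i)))
      refine le_min (by linarith) (by linarith)
    have hmem2 : min (P U) (Q W) ∈
        insert (0:ℝ) {t | ∃ a b : V, x = a + b ∧ t = min (P a) (Q b)} :=
      Set.mem_insert_of_mem _ ⟨U, W, hxUW, rfl⟩
    have h5 : min (P U) (Q W) ≤ supDecomp P Q x := le_csSup bddRHS hmem2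
    have h6 := le_min hTU hTW
    have h7 := min_le_left (P U) (Q W)
    linarith [le_trans h6 h5]
  · refine Real.sSup_le ?_ hLHSnn
    rintro w (rfl | ⟨U, W, hxUW, rfl⟩)
    · exact hLHSnn
    refine le_of_forall_pos_le_add fun ε hε => ?_
    obtain ⟨t₁, ht₁mem, ht₁⟩ := exists_lt_of_lt_csSup (Set.insert_nonempty _ _)
      (show P U - ε < P U from sub_lt_self _ hε)
    rcases ht₁mem with rfl | ⟨n, c, a, b, hU, ht₁eq⟩
    · have := min_le_left (P U) (Q W); linarith
    obtain ⟨t₂, ht₂mem, ht₂⟩ := exists_lt_of_lt_csSup (Set.insert_nonempty _ _)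
      (show Q W - ε < Q W from sub_lt_self _ hε)
    rcases ht₂mem with rfl | ⟨m, d, a₂, b₂, hW, ht₂eq⟩
    · have := min_le_right (P U) (Q W); linarith
    haveI hne : Nonempty (Fin ((n + 1) + (m + 1))) := ⟨⟨0, by omega⟩⟩
    have hsum : ∑ i : Fin ((n + 1) + (m + 1)),
        Fin.append c d i • br (Fin.append a a₂ i) (Fin.append b b₂ i) = U + W := by
      rw [Fin.sum_univ_add]
      simp only [Fin.append_left, Fin.append_right]
      rw [← hU, ← hW]
    have hT : (Finset.univ.inf' Finset.univ_nonempty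
        fun i : Fin ((n + 1) + (m + 1)) =>
          min (s (Fin.append a a₂ i)) (g (Fin.append b b₂ i)))
        ∈ bracketRepMin K br s g x :=
      ⟨n + 1 + m, (Fin.append c d : Fin ((n + 1) + (m + 1)) → K),
        (Fin.append a a₂ : Fin ((n + 1) + (m + 1)) → V),
        (Fin.append b b₂ : Fin ((n + 1) + (m + 1)) → V),
        hxUW.trans hsum.symm, rfl⟩
    have hTle : (Finset.univ.inf' Finset.univ_nonempty
        fun i : Fin ((n + 1) + (m + 1)) =>
          min (s (Fin.append a a₂ i)) (g (Fin.append b b₂ i)))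
        ≤ sSup (insert 0 (bracketRepMin K br s g x)) :=
      le_csSup bddLHS (Set.mem_insert_of_mem _ hT)
    have hminT : min t₁ t₂ ≤ (Finset.univ.inf' Finset.univ_nonempty
        fun i : Fin ((n + 1) + (m + 1)) =>
          min (s (Fin.append a a₂ i)) (g (Fin.append b b₂ i))) := by
      refine Finset.le_inf' _ _ fun j _ => ?_
      induction j using Fin.addCases with
      | left i =>
        rw [Fin.append_left, Fin.append_left]
        have h1 : t₁ ≤ min (f₁ (a i)) (g (b i)) := by
          rw [ht₁eq]; exact Finset.inf'_le _ (Finset.mem_univ i)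
        refine le_trans (min_le_left _ _) (le_trans h1 (min_le_min ?_ le_rfl))
        exact le_supDecomp_left hf₁ hf₂ hf₂0 (a i)
      | right i =>
        rw [Fin.append_right, Fin.append_right]
        have h1 : t₂ ≤ min (f₂ (a₂ i)) (g (b₂ i)) := by
          rw [ht₂eq]; exact Finset.inf'_le _ (Finset.mem_univ i)
        refine le_trans (min_le_right _ _) (le_trans h1 (min_le_min ?_ le_rfl))
        exact le_supDecomp_right hf₁ hf₂ hf₁0 (a₂ i)
    have h8 : min (P U) (Q W) - ε ≤ min t₁ t₂ := by
      have hl := min_le_left (P U) (Q W)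
      have hr := min_le_right (P U) (Q W)
      exact le_min (by linarith) (by linarith)
    linarith
end CoreSup
section CoreInf

variable {K : Type*} [Field K] {V : Type*} [AddCommGroup V] [Module K V]

lemma core_inf (br : V → V → V)
    (hbr : ∀ u v b : V, br (u + v) b = br u b + br v b)
    (f₁ f₂ g : V → ℝ)
    (hf₁ : ∀ z, f₁ z ∈ Set.Icc (0:ℝ) 1) (hf₂ : ∀ z, f₂ z ∈ Set.Icc (0:ℝ) 1)
    (hg : ∀ z, g z ∈ Set.Icc (0:ℝ) 1)
    (hf₁0 : f₁ 0 = 0) (hf₂0 : f₂ 0 = 0) (x : V) :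
    sInf (insert 1 (bracketRepMax K br (infDecomp f₁ f₂) g x))
      = infDecomp (fun u => sInf (insert 1 (bracketRepMax K br f₁ g u)))
          (fun v => sInf (insert 1 (bracketRepMax K br f₂ g v))) x := by
  set s : V → ℝ := infDecomp f₁ f₂ with hs
  have hsIcc : ∀ z, s z ∈ Set.Icc (0:ℝ) 1 := fun z => infDecomp_mem_Icc hf₁ hf₂ z
  set P : V → ℝ := fun u => sInf (insert 1 (bracketRepMax K br f₁ g u)) with hP
  set Q : V → ℝ := fun v => sInf (insert 1 (bracketRepMax K br f₂ g v)) with hQ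
  have hPIcc : ∀ z, P z ∈ Set.Icc (0:ℝ) 1 :=
    fun z => sInf_insert_one_mem_Icc (repMax_subset_Icc hf₁ hg z)
  have hQIcc : ∀ z, Q z ∈ Set.Icc (0:ℝ) 1 :=
    fun z => sInf_insert_one_mem_Icc (repMax_subset_Icc hf₂ hg z)
  have hRHSle : infDecomp P Q x ≤ 1 := (infDecomp_mem_Icc hPIcc hQIcc x).2
  have hLHSle : sInf (insert 1 (bracketRepMax K br s g x)) ≤ 1 :=
    (sInf_insert_one_mem_Icc (repMax_subset_Icc hsIcc hg x)).2
  have bddLHS : BddBelow (insert (1:ℝ) (bracketRepMax K br s g x)) :=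
    ⟨0, fun t ht => (repMax_subset_Icc hsIcc hg x ht).1⟩
  have bddRHS : BddBelow (insert (1:ℝ) {t | ∃ a b : V, x = a + b ∧ t = max (P a) (Q b)}) :=
    ⟨0, fun t ht => (infDecomp_set_subset_Icc hPIcc hQIcc x ht).1⟩
  have key : ∀ (a : V) (ε : ℝ), 0 < ε →
      ∃ u v : V, a = u + v ∧ max (f₁ u) (f₂ v) ≤ s a + ε := by
    intro a ε hε
    have hlt : sInf (insert (1:ℝ)
        {t | ∃ u v : V, a = u + v ∧ t = max (f₁ u) (f₂ v)}) < s a + ε := lt_add_of_pos_right _ hε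
    obtain ⟨w, hw, hlt'⟩ := exists_lt_of_csInf_lt (Set.insert_nonempty _ _) hlt
    rcases hw with rfl | ⟨u, v, huv, rfl⟩
    · exact ⟨a, 0, (add_zero a).symm,
        le_trans (max_le (hf₁ a).2 (by rw [hf₂0]; exact zero_le_one)) hlt'.le⟩
    · exact ⟨u, v, huv, hlt'.le⟩
  apply le_antisymm
  · refine le_csInf (Set.insert_nonempty _ _) ?_
    rintro w (rfl | ⟨U, W, hxUW, rfl⟩)
    · exact hLHSle
    refine le_of_forall_pos_le_add fun ε hε => ?_
    obtain ⟨t₁, ht₁mem, ht₁⟩ := exists_lt_of_csInf_lt (Set.insert_nonempty _ _)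
      (show P U < P U + ε from lt_add_of_pos_right _ hε)
    rcases ht₁mem with rfl | ⟨n, c, a, b, hU, ht₁eq⟩
    · have := le_max_left (P U) (Q W); linarith
    obtain ⟨t₂, ht₂mem, ht₂⟩ := exists_lt_of_csInf_lt (Set.insert_nonempty _ _)
      (show Q W < Q W + ε from lt_add_of_pos_right _ hε)
    rcases ht₂mem with rfl | ⟨m, d, a₂, b₂, hW, ht₂eq⟩
    · have := le_max_right (P U) (Q W); linarith
    haveI hne : Nonempty (Fin ((n + 1) + (m + 1))) := ⟨⟨0, by omega⟩⟩
    have hsum : ∑ i : Fin ((n + 1) + (m + 1)),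
        Fin.append c d i • br (Fin.append a a₂ i) (Fin.append b b₂ i) = U + W := by
      rw [Fin.sum_univ_add]
      simp only [Fin.append_left, Fin.append_right]
      rw [← hU, ← hW]
    have hT : (Finset.univ.sup' Finset.univ_nonempty
        fun i : Fin ((n + 1) + (m + 1)) =>
          max (s (Fin.append a a₂ i)) (g (Fin.append b b₂ i)))
        ∈ bracketRepMax K br s g x :=
      ⟨n + 1 + m, (Fin.append c d : Fin ((n + 1) + (m + 1)) → K),
        (Fin.append a a₂ : Fin ((n + 1) + (m + 1)) → V),
        (Fin.append b b₂ : Fin ((n + 1) + (m + 1)) → V),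
        hxUW.trans hsum.symm, rfl⟩
    have hTle : sInf (insert 1 (bracketRepMax K br s g x))
        ≤ (Finset.univ.sup' Finset.univ_nonempty
        fun i : Fin ((n + 1) + (m + 1)) =>
          max (s (Fin.append a a₂ i)) (g (Fin.append b b₂ i))) :=
      csInf_le bddLHS (Set.mem_insert_of_mem _ hT)
    have hminT : (Finset.univ.sup' Finset.univ_nonempty
        fun i : Fin ((n + 1) + (m + 1)) =>
          max (s (Fin.append a a₂ i)) (g (Fin.append b b₂ i))) ≤ max t₁ t₂ := by
      refine Finset.sup'_le _ _ fun j _ => ?_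
      induction j using Fin.addCases with
      | left i =>
        rw [Fin.append_left, Fin.append_left]
        have h1 : max (f₁ (a i)) (g (b i)) ≤ t₁ := by
          rw [ht₁eq]
          exact Finset.le_sup' (fun j => max (f₁ (a j)) (g (b j))) (Finset.mem_univ i)
        refine le_trans (le_trans (max_le_max ?_ le_rfl) h1) (le_max_left _ _)
        exact infDecomp_le_left hf₁ hf₂ hf₂0 (a i)
      | right i =>
        rw [Fin.append_right, Fin.append_right]
        have h1 : max (f₂ (a₂ i)) (g (b₂ i)) ≤ t₂ := by
          rw [ht₂eq]
          exact Finset.le_sup' (fun j => max (f₂ (a₂ j)) (g (b₂ j))) (Finset.mem_univ i)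
        refine le_trans (le_trans (max_le_max ?_ le_rfl) h1) (le_max_right _ _)
        exact infDecomp_le_right hf₁ hf₂ hf₁0 (a₂ i)
    have h8 : max t₁ t₂ ≤ max (P U) (Q W) + ε := by
      have hl := le_max_left (P U) (Q W)
      have hr := le_max_right (P U) (Q W)
      exact max_le (by linarith) (by linarith)
    linarith
  · refine le_csInf (Set.insert_nonempty _ _) ?_
    rintro t (rfl | ⟨n, c, a, b, hxrep, rfl⟩)
    · exact hRHSle
    refine le_of_forall_pos_le_add fun ε hε => ?_
    choose u v huv hge using fun i : Fin (n + 1) => key (a i) ε hε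
    set U : V := ∑ i, c i • br (u i) (b i) with hU
    set W : V := ∑ i, c i • br (v i) (b i) with hW
    have hxUW : x = U + W := by
      rw [hxrep, hU, hW, ← Finset.sum_add_distrib]
      refine Finset.sum_congr rfl fun i _ => ?_
      rw [huv i, hbr, smul_add]
    have hti : ∀ i : Fin (n + 1), max (s (a i)) (g (b i)) ≤
        (Finset.univ.sup' Finset.univ_nonempty fun j => max (s (a j)) (g (b j))) :=
      fun i => Finset.le_sup' (fun j => max (s (a j)) (g (b j))) (Finset.mem_univ i)
    have hTU : P U ≤
        (Finset.univ.sup' Finset.univ_nonempty fun j => max (s (a j)) (g (b j))) + ε := by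
      have hmem : (Finset.univ.sup' Finset.univ_nonempty fun i => max (f₁ (u i)) (g (b i)))
          ∈ bracketRepMax K br f₁ g U := ⟨n, c, u, b, hU, rfl⟩
      refine le_trans (csInf_le ⟨0, fun t ht => (repMax_subset_Icc hf₁ hg U ht).1⟩
        (Set.mem_insert_of_mem _ hmem)) ?_
      refine Finset.sup'_le _ _ fun i _ => ?_
      have h1 := hti i
      have h2 : f₁ (u i) ≤ s (a i) + ε := le_trans (le_max_left _ _) (hge i)
      have h3 := le_max_left (s (a i)) (g (b i))
      have h4 := le_max_right (s (a i)) (g (b i))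
      exact max_le (by linarith) (by linarith)
    have hTW : Q W ≤
        (Finset.univ.sup' Finset.univ_nonempty fun j => max (s (a j)) (g (b j))) + ε := by
      have hmem : (Finset.univ.sup' Finset.univ_nonempty fun i => max (f₂ (v i)) (g (b i)))
          ∈ bracketRepMax K br f₂ g W := ⟨n, c, v, b, hW, rfl⟩
      refine le_trans (csInf_le ⟨0, fun t ht => (repMax_subset_Icc hf₂ hg W ht).1⟩
        (Set.mem_insert_of_mem _ hmem)) ?_
      refine Finset.sup'_le _ _ fun i _ => ?_
      have h1 := hti i
      have h2 : f₂ (v i) ≤ s (a i) + ε := le_trans (le_max_right _ _) (hge i)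
      have h3 := le_max_left (s (a i)) (g (b i))
      have h4 := le_max_right (s (a i)) (g (b i))
      exact max_le (by linarith) (by linarith)
    have hmem2 : max (P U) (Q W) ∈
        insert (1:ℝ) {t | ∃ a b : V, x = a + b ∧ t = max (P a) (Q b)} :=
      Set.mem_insert_of_mem _ ⟨U, W, hxUW, rfl⟩
    have h5 : infDecomp P Q x ≤ max (P U) (Q W) := csInf_le bddRHS hmem2
    have h6 := max_le hTU hTW
    linarith
end CoreInf
theorem bracket_sum_left {K : Type*} [Field K] {V : Type*} [AddCommGroup V] [Module K V]
    (V0 V1 : Submodule K V) (br : V → V → V) (hLS : IsLieSuper K V0 V1 br)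
    (A₁ A₂ B : CIFSet V) (hA₁ : CIFSet.IsSubspace K A₁) (hA₂ : CIFSet.IsSubspace K A₂)
    (hB : CIFSet.IsSubspace K B) (h12 : A₁.Homog A₂) (h1B : A₁.Homog B)
    (h2B : A₂.Homog B) (hsB : (A₁.sum A₂).Homog B) :
    CIFSet.bracket K br (A₁.sum A₂) B
      = (CIFSet.bracket K br A₁ B).sum (CIFSet.bracket K br A₂ B) := by
  have hr1 : ∀ z, A₁.r z ∈ Set.Icc (0:ℝ) 1 := fun z => (hA₁.isCIF z).1
  have hw1 : ∀ z, A₁.w z ∈ Set.Icc (0:ℝ) 1 := fun z => (hA₁.isCIF z).2.1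
  have hrh1 : ∀ z, A₁.rhat z ∈ Set.Icc (0:ℝ) 1 := fun z => (hA₁.isCIF z).2.2.1
  have hwh1 : ∀ z, A₁.what z ∈ Set.Icc (0:ℝ) 1 := fun z => (hA₁.isCIF z).2.2.2.1
  have hr2 : ∀ z, A₂.r z ∈ Set.Icc (0:ℝ) 1 := fun z => (hA₂.isCIF z).1
  have hw2 : ∀ z, A₂.w z ∈ Set.Icc (0:ℝ) 1 := fun z => (hA₂.isCIF z).2.1
  have hrh2 : ∀ z, A₂.rhat z ∈ Set.Icc (0:ℝ) 1 := fun z => (hA₂.isCIF z).2.2.1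
  have hwh2 : ∀ z, A₂.what z ∈ Set.Icc (0:ℝ) 1 := fun z => (hA₂.isCIF z).2.2.2.1
  have hrB : ∀ z, B.r z ∈ Set.Icc (0:ℝ) 1 := fun z => (hB.isCIF z).1
  have hwB : ∀ z, B.w z ∈ Set.Icc (0:ℝ) 1 := fun z => (hB.isCIF z).2.1
  have hrhB : ∀ z, B.rhat z ∈ Set.Icc (0:ℝ) 1 := fun z => (hB.isCIF z).2.2.1
  have hwhB : ∀ z, B.what z ∈ Set.Icc (0:ℝ) 1 := fun z => (hB.isCIF z).2.2.2.1
  have ext4 : ∀ (X Y : CIFSet V), X.r = Y.r → X.w = Y.w → X.rhat = Y.rhat →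
      X.what = Y.what → X = Y := by
    intro X Y h1 h2 h3 h4
    cases X; cases Y
    simp only [CIFSet.mk.injEq]
    exact ⟨h1, h2, h3, h4⟩
  apply ext4 <;> funext x
  · exact core_sup br hLS.add_left A₁.r A₂.r B.r hr1 hr2 hrB hA₁.r_zero hA₂.r_zero x
  · exact core_sup br hLS.add_left A₁.w A₂.w B.w hw1 hw2 hwB hA₁.w_zero hA₂.w_zero x
  · exact core_inf br hLS.add_left A₁.rhat A₂.rhat B.rhat hrh1 hrh2 hrhB
      hA₁.rhat_zero hA₂.rhat_zero x
  · exact core_inf br hLS.add_left A₁.what A₂.what B.what hwh1 hwh2 hwhB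
      hA₁.what_zero hA₂.what_zero x

end CIF
end

section
/- Let A, B₁, B₂ be CIF vector subspaces of V such that B₁ is homogeneous with B₂, A is homogeneous with each of B₁ and B₂, and A is homogeneous with B₁ + B₂. Then [A, B₁ + B₂] = [A, B₁] + [A, B₂]. -/
namespace CIF

section Aux

variable {K : Type*} [Field K] {V : Type*} [AddCommGroup V] [Module K V]

private lemma repMin_le_one (br : V → V → V) {f g : V → ℝ} (hf : ∀ x, f x ≤ 1) (x : V) :
    ∀ t ∈ insert (0:ℝ) (bracketRepMin K br f g x), t ≤ 1 := by
  rintro t (rfl | ⟨n, c, a, b, hx, rfl⟩)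
  · norm_num
  · exact le_trans (Finset.inf'_le _ (Finset.mem_univ (0 : Fin (n+1))))
      (le_trans (min_le_left _ _) (hf _))

private lemma bddAbove_repMin (br : V → V → V) {f g : V → ℝ} (hf : ∀ x, f x ≤ 1) (x : V) :
    BddAbove (insert (0:ℝ) (bracketRepMin K br f g x)) :=
  ⟨1, fun t ht => repMin_le_one br hf x t ht⟩

private lemma repMin_sSup_nonneg (br : V → V → V) {f g : V → ℝ} (hf : ∀ x, f x ≤ 1) (x : V) :
    (0:ℝ) ≤ sSup (insert (0:ℝ) (bracketRepMin K br f g x)) :=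
  le_csSup (bddAbove_repMin br hf x) (Set.mem_insert _ _)

private lemma one_le_repMax (br : V → V → V) {f g : V → ℝ} (hf : ∀ x, 0 ≤ f x) (x : V) :
    ∀ t ∈ insert (1:ℝ) (bracketRepMax K br f g x), 0 ≤ t := by
  rintro t (rfl | ⟨n, c, a, b, hx, rfl⟩)
  · norm_num
  · exact le_trans (le_trans (hf (a 0)) (le_max_left _ _))
      (Finset.le_sup' (fun i => max (f (a i)) (g (b i))) (Finset.mem_univ (0 : Fin (n+1))))

private lemma bddBelow_repMax (br : V → V → V) {f g : V → ℝ} (hf : ∀ x, 0 ≤ f x) (x : V) :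
    BddBelow (insert (1:ℝ) (bracketRepMax K br f g x)) :=
  ⟨0, fun t ht => one_le_repMax br hf x t ht⟩

private lemma repMax_sInf_le_one (br : V → V → V) {f g : V → ℝ} (hf : ∀ x, 0 ≤ f x) (x : V) :
    sInf (insert (1:ℝ) (bracketRepMax K br f g x)) ≤ 1 :=
  csInf_le (bddBelow_repMax br hf x) (Set.mem_insert _ _)

private lemma bddAbove_decomp {g₁ g₂ : V → ℝ} (h₁ : ∀ x, g₁ x ≤ 1) (x : V) :
    BddAbove (insert (0:ℝ) {t | ∃ a b : V, x = a + b ∧ t = min (g₁ a) (g₂ b)}) := by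
  refine ⟨1, ?_⟩
  rintro t (rfl | ⟨a, b, hx, rfl⟩)
  · norm_num
  · exact le_trans (min_le_left _ _) (h₁ a)

private lemma bddBelow_decomp {g₁ g₂ : V → ℝ} (h₁ : ∀ x, 0 ≤ g₁ x) (x : V) :
    BddBelow (insert (1:ℝ) {t | ∃ a b : V, x = a + b ∧ t = max (g₁ a) (g₂ b)}) := by
  refine ⟨0, ?_⟩
  rintro t (rfl | ⟨a, b, hx, rfl⟩)
  · norm_num
  · exact le_trans (h₁ a) (le_trans (le_max_left _ _) le_rfl)

private lemma le_supDecomp_left_s3 {g₁ g₂ : V → ℝ} (h₁ : ∀ x, g₁ x ≤ 1) (hz₂ : g₂ 0 = 1)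
    (x : V) : g₁ x ≤ supDecomp g₁ g₂ x := by
  refine le_csSup (bddAbove_decomp h₁ x) (Set.mem_insert_of_mem _ ?_)
  exact ⟨x, 0, (add_zero x).symm, by rw [hz₂]; exact (min_eq_left (h₁ x)).symm⟩

private lemma le_supDecomp_right_s3 {g₁ g₂ : V → ℝ} (h₁ : ∀ x, g₁ x ≤ 1) (h₂ : ∀ x, g₂ x ≤ 1)
    (hz₁ : g₁ 0 = 1) (x : V) : g₂ x ≤ supDecomp g₁ g₂ x := by
  refine le_csSup (bddAbove_decomp h₁ x) (Set.mem_insert_of_mem _ ?_)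
  exact ⟨0, x, (zero_add x).symm, by rw [hz₁]; exact (min_eq_right (h₂ x)).symm⟩

private lemma infDecomp_le_left_s3 {g₁ g₂ : V → ℝ} (h₁ : ∀ x, 0 ≤ g₁ x) (hz₂ : g₂ 0 = 0)
    (x : V) : infDecomp g₁ g₂ x ≤ g₁ x := by
  refine csInf_le (bddBelow_decomp h₁ x) (Set.mem_insert_of_mem _ ?_)
  exact ⟨x, 0, (add_zero x).symm, by rw [hz₂]; exact (max_eq_left (h₁ x)).symm⟩

private lemma infDecomp_le_right_s3 {g₁ g₂ : V → ℝ} (h₁ : ∀ x, 0 ≤ g₁ x) (h₂ : ∀ x, 0 ≤ g₂ x)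
    (hz₁ : g₁ 0 = 0) (x : V) : infDecomp g₁ g₂ x ≤ g₂ x := by
  refine csInf_le (bddBelow_decomp h₁ x) (Set.mem_insert_of_mem _ ?_)
  exact ⟨0, x, (zero_add x).symm, by rw [hz₁]; exact (max_eq_right (h₂ x)).symm⟩

private lemma brSup_sum (br : V → V → V)
    (hadd : ∀ x y z : V, br x (y + z) = br x y + br x z)
    (f g₁ g₂ : V → ℝ)
    (hf1 : ∀ x, f x ≤ 1)
    (hg₁0 : ∀ x, 0 ≤ g₁ x) (hg₁1 : ∀ x, g₁ x ≤ 1)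
    (hg₂0 : ∀ x, 0 ≤ g₂ x) (hg₂1 : ∀ x, g₂ x ≤ 1)
    (hz₁ : g₁ 0 = 1) (hz₂ : g₂ 0 = 1) (x : V) :
    sSup (insert 0 (bracketRepMin K br f (supDecomp g₁ g₂) x))
      = supDecomp (fun u => sSup (insert 0 (bracketRepMin K br f g₁ u)))
          (fun v => sSup (insert 0 (bracketRepMin K br f g₂ v))) x := by
  set F₁ : V → ℝ := fun u => sSup (insert 0 (bracketRepMin K br f g₁ u)) with hF₁
  set F₂ : V → ℝ := fun v => sSup (insert 0 (bracketRepMin K br f g₂ v)) with hF₂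
  have hF₁1 : ∀ u, F₁ u ≤ 1 := fun u =>
    Real.sSup_le (repMin_le_one br hf1 u) zero_le_one
  have hF₂1 : ∀ v, F₂ v ≤ 1 := fun v =>
    Real.sSup_le (repMin_le_one br hf1 v) zero_le_one
  have hRHSbdd : BddAbove (insert (0:ℝ)
      {t | ∃ a b : V, x = a + b ∧ t = min (F₁ a) (F₂ b)}) := bddAbove_decomp hF₁1 x
  have hRHS0 : (0:ℝ) ≤ supDecomp F₁ F₂ x := le_csSup hRHSbdd (Set.mem_insert _ _)
  have hLHS0 : (0:ℝ) ≤ sSup (insert 0 (bracketRepMin K br f (supDecomp g₁ g₂) x)) :=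
    repMin_sSup_nonneg br hf1 x
  apply le_antisymm
  · -- LHS ≤ RHS
    apply Real.sSup_le _ hRHS0
    rintro t (rfl | ⟨n, c, a, b, hx, rfl⟩)
    · exact hRHS0
    set t := Finset.univ.inf' Finset.univ_nonempty
      (fun i : Fin (n+1) => min (f (a i)) (supDecomp g₁ g₂ (b i))) with hts
    apply le_of_forall_pos_le_add
    intro ε hε
    have hchoice : ∀ i : Fin (n+1), ∃ p q : V, b i = p + q ∧
        supDecomp g₁ g₂ (b i) - ε < min (g₁ p) (g₂ q) := by
      intro i
      have hlt : supDecomp g₁ g₂ (b i) - ε < supDecomp g₁ g₂ (b i) := by linarith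
      obtain ⟨d, hd, hdlt⟩ := exists_lt_of_lt_csSup
        (Set.insert_nonempty _ _) hlt
      rcases hd with rfl | ⟨p, q, hpq, rfl⟩
      · refine ⟨b i, 0, (add_zero _).symm, lt_of_lt_of_le hdlt ?_⟩
        exact le_min (hg₁0 _) (by rw [hz₂]; norm_num)
      · exact ⟨p, q, hpq, hdlt⟩
    choose p q hpq hplt using hchoice
    set u := ∑ i, c i • br (a i) (p i) with hu
    set v := ∑ i, c i • br (a i) (q i) with hv
    have hxuv : x = u + v := by
      rw [hx, hu, hv, ← Finset.sum_add_distrib]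
      refine Finset.sum_congr rfl fun i _ => ?_
      rw [hpq i, hadd, smul_add]
    have hkey : ∀ (g : V → ℝ) (w : Fin (n+1) → V), (∀ i, t - ε ≤ min (f (a i)) (g (w i))) →
        t - ε ≤ sSup (insert 0 (bracketRepMin K br f g (∑ i, c i • br (a i) (w i)))) := by
      intro g w hw
      refine le_trans ?_ (le_csSup (bddAbove_repMin br hf1 _)
        (Set.mem_insert_of_mem _ ⟨n, c, a, w, rfl, rfl⟩))
      exact Finset.le_inf' _ _ fun i _ => hw i
    have hti : ∀ i, t ≤ min (f (a i)) (supDecomp g₁ g₂ (b i)) :=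
      fun i => Finset.inf'_le _ (Finset.mem_univ i)
    have h₁ : t - ε ≤ F₁ u := by
      rw [hF₁, hu]
      refine hkey g₁ p fun i => le_min ?_ ?_
      · have := le_trans (hti i) (min_le_left _ _); linarith
      · have h1 := le_trans (hti i) (min_le_right _ _)
        have h2 := lt_of_lt_of_le (hplt i) (min_le_left _ _)
        linarith
    have h₂ : t - ε ≤ F₂ v := by
      rw [hF₂, hv]
      refine hkey g₂ q fun i => le_min ?_ ?_
      · have := le_trans (hti i) (min_le_left _ _); linarith
      · have h1 := le_trans (hti i) (min_le_right _ _)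
        have h2 := lt_of_lt_of_le (hplt i) (min_le_right _ _)
        linarith
    have hmem : min (F₁ u) (F₂ v) ≤ supDecomp F₁ F₂ x :=
      le_csSup hRHSbdd (Set.mem_insert_of_mem _ ⟨u, v, hxuv, rfl⟩)
    have := le_min h₁ h₂
    linarith
  · -- RHS ≤ LHS
    apply Real.sSup_le _ hLHS0
    rintro t (rfl | ⟨u, v, hxuv, rfl⟩)
    · exact hLHS0
    apply le_of_forall_pos_le_add
    intro ε hε
    have hlt₁ : F₁ u - ε < sSup (insert 0 (bracketRepMin K br f g₁ u)) := by
      rw [hF₁]; simp only; linarith [show F₁ u - ε < F₁ u by linarith]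
    obtain ⟨d₁, hd₁, hd₁lt⟩ := exists_lt_of_lt_csSup (Set.insert_nonempty _ _) hlt₁
    have hlt₂ : F₂ v - ε < sSup (insert 0 (bracketRepMin K br f g₂ v)) := by
      rw [hF₂]; simp only; linarith [show F₂ v - ε < F₂ v by linarith]
    obtain ⟨d₂, hd₂, hd₂lt⟩ := exists_lt_of_lt_csSup (Set.insert_nonempty _ _) hlt₂
    rcases hd₁ with rfl | ⟨n₁, c₁, a₁, b₁, hu, rfl⟩
    · have : min (F₁ u) (F₂ v) ≤ F₁ u := min_le_left _ _
      linarith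
    rcases hd₂ with rfl | ⟨n₂, c₂, a₂, b₂, hv, rfl⟩
    · have : min (F₁ u) (F₂ v) ≤ F₂ v := min_le_right _ _
      linarith
    set d₁ := Finset.univ.inf' Finset.univ_nonempty
      (fun i : Fin (n₁+1) => min (f (a₁ i)) (g₁ (b₁ i))) with hd₁s
    set d₂ := Finset.univ.inf' Finset.univ_nonempty
      (fun i : Fin (n₂+1) => min (f (a₂ i)) (g₂ (b₂ i))) with hd₂s
    haveI : Nonempty (Fin ((n₁ + 1) + (n₂ + 1))) := ⟨⟨0, by omega⟩⟩
    have hsum : x = ∑ i : Fin ((n₁ + 1) + (n₂ + 1)),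
        Fin.append c₁ c₂ i • br (Fin.append a₁ a₂ i) (Fin.append b₁ b₂ i) := by
      rw [hxuv, hu, hv]
      rw [Fin.sum_univ_add (f := fun i : Fin ((n₁ + 1) + (n₂ + 1)) =>
        Fin.append c₁ c₂ i • br (Fin.append a₁ a₂ i) (Fin.append b₁ b₂ i))]
      congr 1
      · exact Finset.sum_congr rfl fun i _ => by
          rw [Fin.append_left, Fin.append_left, Fin.append_left]
      · exact Finset.sum_congr rfl fun i _ => by
          rw [Fin.append_right, Fin.append_right, Fin.append_right]
    have hmem : (Finset.univ.inf' Finset.univ_nonempty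
        (fun i : Fin ((n₁ + 1) + (n₂ + 1)) => min (f (Fin.append a₁ a₂ i))
          (supDecomp g₁ g₂ (Fin.append b₁ b₂ i))))
        ∈ bracketRepMin K br f (supDecomp g₁ g₂) x :=
      ⟨n₁ + 1 + n₂, (Fin.append c₁ c₂ : Fin ((n₁ + 1) + (n₂ + 1)) → K),
        (Fin.append a₁ a₂ : Fin ((n₁ + 1) + (n₂ + 1)) → V),
        (Fin.append b₁ b₂ : Fin ((n₁ + 1) + (n₂ + 1)) → V), hsum, rfl⟩
    have hge : min d₁ d₂ ≤ Finset.univ.inf' Finset.univ_nonempty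
        (fun i : Fin ((n₁ + 1) + (n₂ + 1)) => min (f (Fin.append a₁ a₂ i))
          (supDecomp g₁ g₂ (Fin.append b₁ b₂ i))) := by
      refine Finset.le_inf' _ _ fun j _ => ?_
      induction j using Fin.addCases with
      | left i =>
        rw [Fin.append_left, Fin.append_left]
        refine le_trans (min_le_left _ _) (le_trans (Finset.inf'_le _ (Finset.mem_univ i)) ?_)
        exact min_le_min le_rfl (le_supDecomp_left_s3 hg₁1 hz₂ _)
      | right i =>
        rw [Fin.append_right, Fin.append_right]
        refine le_trans (min_le_right _ _) (le_trans (Finset.inf'_le _ (Finset.mem_univ i)) ?_)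
        exact min_le_min le_rfl (le_supDecomp_right_s3 hg₁1 hg₂1 hz₁ _)
    have hle := le_csSup (bddAbove_repMin br hf1 x) (Set.mem_insert_of_mem _ hmem)
    have h1 : min (F₁ u) (F₂ v) - ε ≤ min d₁ d₂ := by
      have := min_le_left (F₁ u) (F₂ v)
      have := min_le_right (F₁ u) (F₂ v)
      rcases le_total d₁ d₂ with h | h
      · rw [min_eq_left h]; linarith
      · rw [min_eq_right h]; linarith
    linarith

private lemma brInf_sum (br : V → V → V)
    (hadd : ∀ x y z : V, br x (y + z) = br x y + br x z)
    (f g₁ g₂ : V → ℝ)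
    (hf0 : ∀ x, 0 ≤ f x)
    (hg₁0 : ∀ x, 0 ≤ g₁ x) (hg₁1 : ∀ x, g₁ x ≤ 1)
    (hg₂0 : ∀ x, 0 ≤ g₂ x) (hg₂1 : ∀ x, g₂ x ≤ 1)
    (hz₁ : g₁ 0 = 0) (hz₂ : g₂ 0 = 0) (x : V) :
    sInf (insert 1 (bracketRepMax K br f (infDecomp g₁ g₂) x))
      = infDecomp (fun u => sInf (insert 1 (bracketRepMax K br f g₁ u)))
          (fun v => sInf (insert 1 (bracketRepMax K br f g₂ v))) x := by
  set F₁ : V → ℝ := fun u => sInf (insert 1 (bracketRepMax K br f g₁ u)) with hF₁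
  set F₂ : V → ℝ := fun v => sInf (insert 1 (bracketRepMax K br f g₂ v)) with hF₂
  have hF₁0 : ∀ u, 0 ≤ F₁ u := fun u =>
    le_csInf (Set.insert_nonempty _ _) (one_le_repMax br hf0 u)
  have hF₂0 : ∀ v, 0 ≤ F₂ v := fun v =>
    le_csInf (Set.insert_nonempty _ _) (one_le_repMax br hf0 v)
  have hRHSbdd : BddBelow (insert (1:ℝ)
      {t | ∃ a b : V, x = a + b ∧ t = max (F₁ a) (F₂ b)}) := bddBelow_decomp hF₁0 x
  have hRHS1 : infDecomp F₁ F₂ x ≤ 1 := csInf_le hRHSbdd (Set.mem_insert _ _)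
  have hLHS1 : sInf (insert 1 (bracketRepMax K br f (infDecomp g₁ g₂) x)) ≤ 1 :=
    repMax_sInf_le_one br hf0 x
  apply le_antisymm
  · -- LHS ≤ RHS
    apply le_of_forall_pos_le_add
    intro ε hε
    obtain ⟨δ, hδ, hδε⟩ : ∃ δ : ℝ, 0 < δ ∧ 3*δ ≤ ε := ⟨ε/3, by linarith, by linarith⟩
    have h1 : infDecomp F₁ F₂ x < infDecomp F₁ F₂ x + δ := by linarith
    obtain ⟨d, hd, hdlt⟩ := exists_lt_of_csInf_lt (Set.insert_nonempty _ _) h1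
    rcases hd with rfl | ⟨u, v, hxuv, rfl⟩
    · linarith
    -- d = max (F₁ u) (F₂ v) < infDecomp F₁ F₂ x + δ; find reps of u and v
    have hlt₁ : sInf (insert 1 (bracketRepMax K br f g₁ u)) < F₁ u + δ := by
      rw [hF₁]; simp only; linarith [show F₁ u < F₁ u + δ by linarith]
    obtain ⟨d₁, hd₁, hd₁lt⟩ := exists_lt_of_csInf_lt (Set.insert_nonempty _ _) hlt₁
    have hlt₂ : sInf (insert 1 (bracketRepMax K br f g₂ v)) < F₂ v + δ := by
      rw [hF₂]; simp only; linarith [show F₂ v < F₂ v + δ by linarith]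
    obtain ⟨d₂, hd₂, hd₂lt⟩ := exists_lt_of_csInf_lt (Set.insert_nonempty _ _) hlt₂
    rcases hd₁ with rfl | ⟨n₁, c₁, a₁, b₁, hu, rfl⟩
    · have : F₁ u ≤ max (F₁ u) (F₂ v) := le_max_left _ _
      linarith
    rcases hd₂ with rfl | ⟨n₂, c₂, a₂, b₂, hv, rfl⟩
    · have : F₂ v ≤ max (F₁ u) (F₂ v) := le_max_right _ _
      linarith
    set d₁ := Finset.univ.sup' Finset.univ_nonempty
      (fun i : Fin (n₁+1) => max (f (a₁ i)) (g₁ (b₁ i))) with hd₁s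
    set d₂ := Finset.univ.sup' Finset.univ_nonempty
      (fun i : Fin (n₂+1) => max (f (a₂ i)) (g₂ (b₂ i))) with hd₂s
    haveI : Nonempty (Fin ((n₁ + 1) + (n₂ + 1))) := ⟨⟨0, by omega⟩⟩
    have hsum : x = ∑ i : Fin ((n₁ + 1) + (n₂ + 1)),
        Fin.append c₁ c₂ i • br (Fin.append a₁ a₂ i) (Fin.append b₁ b₂ i) := by
      rw [hxuv, hu, hv]
      rw [Fin.sum_univ_add (f := fun i : Fin ((n₁ + 1) + (n₂ + 1)) =>
        Fin.append c₁ c₂ i • br (Fin.append a₁ a₂ i) (Fin.append b₁ b₂ i))]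
      congr 1
      · exact Finset.sum_congr rfl fun i _ => by
          rw [Fin.append_left, Fin.append_left, Fin.append_left]
      · exact Finset.sum_congr rfl fun i _ => by
          rw [Fin.append_right, Fin.append_right, Fin.append_right]
    have hmem : (Finset.univ.sup' Finset.univ_nonempty
        (fun i : Fin ((n₁ + 1) + (n₂ + 1)) => max (f (Fin.append a₁ a₂ i))
          (infDecomp g₁ g₂ (Fin.append b₁ b₂ i))))
        ∈ bracketRepMax K br f (infDecomp g₁ g₂) x :=
      ⟨n₁ + 1 + n₂, (Fin.append c₁ c₂ : Fin ((n₁ + 1) + (n₂ + 1)) → K),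
        (Fin.append a₁ a₂ : Fin ((n₁ + 1) + (n₂ + 1)) → V),
        (Fin.append b₁ b₂ : Fin ((n₁ + 1) + (n₂ + 1)) → V), hsum, rfl⟩
    have hge : Finset.univ.sup' Finset.univ_nonempty
        (fun i : Fin ((n₁ + 1) + (n₂ + 1)) => max (f (Fin.append a₁ a₂ i))
          (infDecomp g₁ g₂ (Fin.append b₁ b₂ i))) ≤ max d₁ d₂ := by
      refine Finset.sup'_le _ _ fun j _ => ?_
      induction j using Fin.addCases with
      | left i =>
        rw [Fin.append_left, Fin.append_left]
        refine le_trans (le_trans ?_ (Finset.le_sup' _ (Finset.mem_univ i))) (le_max_left _ _)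
        exact max_le_max le_rfl (infDecomp_le_left_s3 hg₁0 hz₂ _)
      | right i =>
        rw [Fin.append_right, Fin.append_right]
        refine le_trans (le_trans ?_ (Finset.le_sup' _ (Finset.mem_univ i))) (le_max_right _ _)
        exact max_le_max le_rfl (infDecomp_le_right_s3 hg₁0 hg₂0 hz₁ _)
    have hle := csInf_le (bddBelow_repMax br hf0 x) (Set.mem_insert_of_mem _ hmem)
    have h2 : max d₁ d₂ ≤ max (F₁ u) (F₂ v) + δ := by
      have := le_max_left (F₁ u) (F₂ v)
      have := le_max_right (F₁ u) (F₂ v)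
      rcases le_total d₁ d₂ with h | h
      · rw [max_eq_right h]; linarith
      · rw [max_eq_left h]; linarith
    -- need + 2ε; absorb: we prove ≤ RHS + 2ε pattern via generic argument
    linarith
  · -- RHS ≤ LHS
    apply le_of_forall_pos_le_add
    intro ε hε
    obtain ⟨δ, hδ, hδε⟩ : ∃ δ : ℝ, 0 < δ ∧ 3*δ ≤ ε := ⟨ε/3, by linarith, by linarith⟩
    have h1 : sInf (insert 1 (bracketRepMax K br f (infDecomp g₁ g₂) x))
        < sInf (insert 1 (bracketRepMax K br f (infDecomp g₁ g₂) x)) + δ := by linarith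
    obtain ⟨d, hd, hdlt⟩ := exists_lt_of_csInf_lt (Set.insert_nonempty _ _) h1
    rcases hd with rfl | ⟨n, c, a, b, hx, rfl⟩
    · linarith
    set t := Finset.univ.sup' Finset.univ_nonempty
      (fun i : Fin (n+1) => max (f (a i)) (infDecomp g₁ g₂ (b i))) with hts
    have hchoice : ∀ i : Fin (n+1), ∃ p q : V, b i = p + q ∧
        max (g₁ p) (g₂ q) < infDecomp g₁ g₂ (b i) + δ := by
      intro i
      have hlt : infDecomp g₁ g₂ (b i) < infDecomp g₁ g₂ (b i) + δ := by linarith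
      obtain ⟨d', hd', hdlt'⟩ := exists_lt_of_csInf_lt (Set.insert_nonempty _ _) hlt
      rcases hd' with rfl | ⟨p, q, hpq, rfl⟩
      · refine ⟨b i, 0, (add_zero _).symm, lt_of_le_of_lt ?_ hdlt'⟩
        exact max_le (hg₁1 _) (by rw [hz₂]; norm_num)
      · exact ⟨p, q, hpq, hdlt'⟩
    choose p q hpq hplt using hchoice
    set u := ∑ i, c i • br (a i) (p i) with hu
    set v := ∑ i, c i • br (a i) (q i) with hv
    have hxuv : x = u + v := by
      rw [hx, hu, hv, ← Finset.sum_add_distrib]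
      refine Finset.sum_congr rfl fun i _ => ?_
      rw [hpq i, hadd, smul_add]
    have hkey : ∀ (g : V → ℝ) (w : Fin (n+1) → V), (∀ i, max (f (a i)) (g (w i)) ≤ t + δ) →
        sInf (insert 1 (bracketRepMax K br f g (∑ i, c i • br (a i) (w i)))) ≤ t + δ := by
      intro g w hw
      refine le_trans (csInf_le (bddBelow_repMax br hf0 _)
        (Set.mem_insert_of_mem _ ⟨n, c, a, w, rfl, rfl⟩)) ?_
      exact Finset.sup'_le _ _ fun i _ => hw i
    have hti : ∀ i, max (f (a i)) (infDecomp g₁ g₂ (b i)) ≤ t :=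
      fun i => Finset.le_sup'
        (fun i : Fin (n+1) => max (f (a i)) (infDecomp g₁ g₂ (b i))) (Finset.mem_univ i)
    have h₁ : F₁ u ≤ t + δ := by
      rw [hF₁, hu]
      refine hkey g₁ p fun i => max_le ?_ ?_
      · have := le_trans (le_max_left _ _) (hti i); linarith
      · have h1 := le_trans (le_max_right _ _) (hti i)
        have h2 := lt_of_le_of_lt (le_max_left (g₁ (p i)) (g₂ (q i))) (hplt i)
        linarith
    have h₂ : F₂ v ≤ t + δ := by
      rw [hF₂, hv]
      refine hkey g₂ q fun i => max_le ?_ ?_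
      · have := le_trans (le_max_left _ _) (hti i); linarith
      · have h1 := le_trans (le_max_right _ _) (hti i)
        have h2 := lt_of_le_of_lt (le_max_right (g₁ (p i)) (g₂ (q i))) (hplt i)
        linarith
    have hmem : infDecomp F₁ F₂ x ≤ max (F₁ u) (F₂ v) :=
      csInf_le hRHSbdd (Set.mem_insert_of_mem _ ⟨u, v, hxuv, rfl⟩)
    have := max_le h₁ h₂
    linarith

end Aux

theorem bracket_sum_right {K : Type*} [Field K] {V : Type*} [AddCommGroup V] [Module K V]
    (V0 V1 : Submodule K V) (br : V → V → V) (hLS : IsLieSuper K V0 V1 br)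
    (A B₁ B₂ : CIFSet V) (hA : CIFSet.IsSubspace K A) (hB₁ : CIFSet.IsSubspace K B₁)
    (hB₂ : CIFSet.IsSubspace K B₂) (h12 : B₁.Homog B₂) (hA1 : A.Homog B₁)
    (hA2 : A.Homog B₂) (hAs : A.Homog (B₁.sum B₂)) :
    CIFSet.bracket K br A (B₁.sum B₂)
      = (CIFSet.bracket K br A B₁).sum (CIFSet.bracket K br A B₂) := by
  have hext : ∀ X Y : CIFSet V, X.r = Y.r → X.w = Y.w → X.rhat = Y.rhat → X.what = Y.what →
      X = Y := by
    rintro ⟨_, _, _, _⟩ ⟨_, _, _, _⟩ rfl rfl rfl rfl; rfl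
  have hAr1 : ∀ x, A.r x ≤ 1 := fun x => (hA.isCIF x).1.2
  have hAw1 : ∀ x, A.w x ≤ 1 := fun x => (hA.isCIF x).2.1.2
  have hArh0 : ∀ x, 0 ≤ A.rhat x := fun x => (hA.isCIF x).2.2.1.1
  have hAwh0 : ∀ x, 0 ≤ A.what x := fun x => (hA.isCIF x).2.2.2.1.1
  apply hext <;> funext x
  · exact brSup_sum br hLS.add_right A.r B₁.r B₂.r hAr1
      (fun x => (hB₁.isCIF x).1.1) (fun x => (hB₁.isCIF x).1.2)
      (fun x => (hB₂.isCIF x).1.1) (fun x => (hB₂.isCIF x).1.2)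
      hB₁.r_zero hB₂.r_zero x
  · exact brSup_sum br hLS.add_right A.w B₁.w B₂.w hAw1
      (fun x => (hB₁.isCIF x).2.1.1) (fun x => (hB₁.isCIF x).2.1.2)
      (fun x => (hB₂.isCIF x).2.1.1) (fun x => (hB₂.isCIF x).2.1.2)
      hB₁.w_zero hB₂.w_zero x
  · exact brInf_sum br hLS.add_right A.rhat B₁.rhat B₂.rhat hArh0
      (fun x => (hB₁.isCIF x).2.2.1.1) (fun x => (hB₁.isCIF x).2.2.1.2)
      (fun x => (hB₂.isCIF x).2.2.1.1) (fun x => (hB₂.isCIF x).2.2.1.2)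
      hB₁.rhat_zero hB₂.rhat_zero x
  · exact brInf_sum br hLS.add_right A.what B₁.what B₂.what hAwh0
      (fun x => (hB₁.isCIF x).2.2.2.1.1) (fun x => (hB₁.isCIF x).2.2.2.1.2)
      (fun x => (hB₂.isCIF x).2.2.2.1.1) (fun x => (hB₂.isCIF x).2.2.2.1.2)
      hB₁.what_zero hB₂.what_zero x

end CIF
end
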